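/- For every n ≥ 1, Σ_{p=0}^{n−1} (1/2 − 1/2^{p+2})² + Σ_{p=0}^∞ (1/2^{p+2} − 1/2^{p+n+2})² = n/4 − 1/3 + 1/(3·2^n). Consequently, (1/n)∫_0^1 (Σ_{k=1}^n f(2^k x))² dx → 1/4 as n → ∞, where f(x) = x − ⌊x⌋ − 1/2. -/

import Mathlib

/-!
Write `S n x = ∑_{k=1}^n f(2^k x)`, so that `S (n+1) x = (f + S n)(2x)`. For a 1-periodic `g`
the substitution `x ↦ 2x` preserves `∫_0^1 g`, and Hermite's duplication formula
`f(x) + f(x + 1/2) = f(2x)` gives `∫_0^1 f(x) g(2x) dx = ½ ∫_0^1 f g`. Hence `c n = ∫_0^1 f · S n`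
satisfies `c (n+1) = (1/12 + c n)/2`, i.e. `c n = (1 - 2^{-n})/12`, and
`∫_0^1 (S (n+1))² = 1/12 + 2 c n + ∫_0^1 (S n)²`, which sums to `n/4 - 1/3 + 1/(3·2^n)`.
The sum of squared coefficients is evaluated by geometric sums to the same closed form.
-/

open MeasureTheory Filter

/-- The first Bernoulli polynomial of the fractional part, `f(x) = x - ⌊x⌋ - 1/2`. -/
noncomputable def bern (x : ℝ) : ℝ := x - ⌊x⌋ - 1 / 2

open Function intervalIntegral

theorem Int.floor_add_floor_add_half {α : Type*} [Field α] [LinearOrder α] [IsStrictOrderedRing α]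
    [FloorRing α] (x : α) : ⌊x⌋ + ⌊x + 1 / 2⌋ = ⌊2 * x⌋ := by
  have h₀ := Int.floor_le x
  have h₁ := Int.lt_floor_add_one x
  rcases lt_or_ge x (⌊x⌋ + 1 / 2) with h | h
  · rw [Int.floor_eq_iff.2 (⟨by linarith, by linarith⟩ : (⌊x⌋ : α) ≤ x + 1 / 2 ∧ _),
      eq_comm, Int.floor_eq_iff]
    push_cast
    constructor <;> linarith
  · rw [Int.floor_eq_iff.2 (⟨by push_cast; linarith, by push_cast; linarith⟩ :
      ((⌊x⌋ + 1 : ℤ) : α) ≤ x + 1 / 2 ∧ _), eq_comm, Int.floor_eq_iff]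
    push_cast
    constructor <;> linarith

theorem bern_add_bern_add_half (x : ℝ) : bern x + bern (x + 1 / 2) = bern (2 * x) := by
  have h : (⌊x⌋ + ⌊x + 1 / 2⌋ : ℝ) = ⌊2 * x⌋ := mod_cast Int.floor_add_floor_add_half x
  simp only [bern]
  linarith

theorem bern_periodic : Periodic bern 1 := fun x => by
  simp only [bern, Int.floor_add_one]
  push_cast
  ring

theorem measurable_bern : Measurable bern := by
  unfold bern
  fun_prop

theorem abs_bern_le (x : ℝ) : |bern x| ≤ 1 / 2 := by
  have h₀ := Int.floor_le x
  have h₁ := Int.lt_floor_add_one x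
  rw [abs_le, bern]
  constructor <;> linarith

theorem integral_bern_sq : ∫ x in (0 : ℝ)..1, bern x ^ 2 = 1 / 12 := by
  have h : Set.EqOn (fun x => bern x ^ 2) (fun x => (x - 1 / 2) ^ 2) (Set.Ioo 0 1) :=
    fun x hx => by simp [bern, Int.floor_eq_zero_iff.2 ⟨hx.1.le, hx.2⟩]
  rw [integral_congr_Ioo_of_le zero_le_one h, integral_comp_sub_right (· ^ 2), integral_pow]
  norm_num

theorem Function.Periodic.intervalIntegral_comp_natCast_mul {E : Type*} [NormedAddCommGroup E]
    [NormedSpace ℝ E] {g : ℝ → E} (hg : Periodic g 1) (hi : IntervalIntegrable g volume 0 1)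
    {m : ℕ} (hm : m ≠ 0) :
    ∫ x in (0 : ℝ)..1, g (m * x) = ∫ x in (0 : ℝ)..1, g x := by
  have h := hg.intervalIntegral_add_zsmul_eq m 0 (hg.intervalIntegrable₀ one_ne_zero hi)
  simp only [zero_add, ← Int.cast_smul_eq_zsmul ℝ, Int.cast_natCast, smul_eq_mul, mul_one] at h
  rw [integral_comp_mul_left g (Nat.cast_ne_zero.2 hm), mul_zero, mul_one, h,
    inv_smul_smul₀ (Nat.cast_ne_zero.2 hm)]

theorem intervalIntegral.integral_zero_one_eq_integral_add_half {E : Type*} [NormedAddCommGroup E]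
    [NormedSpace ℝ E] {F : ℝ → E} (hF : IntervalIntegrable F volume 0 1) :
    ∫ x in (0 : ℝ)..1, F x = ∫ x in (0 : ℝ)..1 / 2, (F x + F (x + 1 / 2)) := by
  have h₁ : IntervalIntegrable F volume 0 (1 / 2) :=
    hF.mono_set (Set.uIcc_subset_uIcc (by norm_num [Set.mem_uIcc]) (by norm_num [Set.mem_uIcc]))
  have h₂ : IntervalIntegrable F volume (1 / 2) 1 :=
    hF.mono_set (Set.uIcc_subset_uIcc (by norm_num [Set.mem_uIcc]) (by norm_num [Set.mem_uIcc]))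
  have h₂' : IntervalIntegrable (fun x => F (x + 1 / 2)) volume 0 (1 / 2) := by
    convert h₂.comp_add_right (1 / 2) using 1 <;> norm_num
  rw [integral_add h₁ h₂', integral_comp_add_right, ← integral_add_adjacent_intervals h₁ h₂]
  norm_num

theorem IntervalIntegrable.bern_mul {g : ℝ → ℝ} {a b : ℝ} {μ : Measure ℝ}
    (hg : IntervalIntegrable g μ a b) : IntervalIntegrable (fun x => bern x * g x) μ a b := by
  rw [intervalIntegrable_iff] at hg ⊢
  exact hg.bdd_mul measurable_bern.aestronglyMeasurable
    (ae_of_all _ fun x => (Real.norm_eq_abs _).trans_le (abs_bern_le x))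

theorem integral_bern_mul_comp_two_mul {g : ℝ → ℝ} (hg : Periodic g 1)
    (hi : IntervalIntegrable g volume 0 1) :
    ∫ x in (0 : ℝ)..1, bern x * g (2 * x) = 1 / 2 * ∫ x in (0 : ℝ)..1, bern x * g x := by
  have hg₂ : IntervalIntegrable (fun x => g (2 * x)) volume 0 1 := by
    simpa using (hg.intervalIntegrable₀ one_ne_zero hi 0 2).comp_mul_left (c := 2)
  calc ∫ x in (0 : ℝ)..1, bern x * g (2 * x)
      = ∫ x in (0 : ℝ)..1 / 2, bern (2 * x) * g (2 * x) := by
        rw [integral_zero_one_eq_integral_add_half hg₂.bern_mul]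
        refine integral_congr fun _ _ => ?_
        rw [mul_add, mul_one_div_cancel two_ne_zero, hg, ← add_mul, bern_add_bern_add_half]
    _ = 1 / 2 * ∫ x in (0 : ℝ)..1, bern x * g x := by
        rw [integral_comp_mul_left (fun x => bern x * g x) two_ne_zero]
        norm_num

theorem memLp_top_bern_comp_mul (c : ℝ) : MemLp (fun x => bern (c * x)) ⊤ volume :=
  memLp_top_of_bound (measurable_bern.comp (measurable_const_mul c)).aestronglyMeasurable (1 / 2)
    (ae_of_all _ fun _ => (Real.norm_eq_abs _).trans_le (abs_bern_le _))

theorem memLp_top_bern : MemLp bern ⊤ volume := by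
  simpa using memLp_top_bern_comp_mul 1

theorem MeasureTheory.MemLp.intervalIntegrable {E : Type*} [NormedAddCommGroup E] {f : ℝ → E}
    (hf : MemLp f ⊤ volume) (a b : ℝ) :
    IntervalIntegrable f volume a b :=
  ⟨(hf.restrict _).integrable le_top, (hf.restrict _).integrable le_top⟩

theorem MeasureTheory.MemLp.intervalIntegrable_sq {R : Type*} [NormedRing R] {f : ℝ → R}
    (hf : MemLp f ⊤ volume) (a b : ℝ) :
    IntervalIntegrable (fun x => f x ^ 2) volume a b := by
  simp_rw [sq]
  exact (hf.mul hf).intervalIntegrable a b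

noncomputable def dyadicBernSum (n : ℕ) (x : ℝ) : ℝ := ∑ k ∈ Finset.Icc 1 n, bern (2 ^ k * x)

theorem dyadicBernSum_succ (n : ℕ) (x : ℝ) :
    dyadicBernSum (n + 1) x = bern (2 * x) + dyadicBernSum n (2 * x) := by
  induction n with
  | zero => simp [dyadicBernSum]
  | succ n ih =>
    rw [dyadicBernSum, Finset.sum_Icc_succ_top (by omega), ← dyadicBernSum, ih, add_assoc,
      dyadicBernSum, dyadicBernSum, Finset.sum_Icc_succ_top (by omega), pow_succ, mul_assoc]

theorem periodic_dyadicBernSum (n : ℕ) : Periodic (dyadicBernSum n) 1 := fun x => by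
  refine Finset.sum_congr rfl fun k _ => ?_
  simpa [mul_add] using bern_periodic.nat_mul (2 ^ k) (2 ^ k * x)

theorem memLp_top_dyadicBernSum (n : ℕ) : MemLp (dyadicBernSum n) ⊤ volume :=
  memLp_finsetSum _ fun _ _ => memLp_top_bern_comp_mul _

theorem integral_bern_mul_dyadicBernSum (n : ℕ) :
    ∫ x in (0 : ℝ)..1, bern x * dyadicBernSum n x = (1 - 1 / 2 ^ n) / 12 := by
  induction n with
  | zero => simp [dyadicBernSum]
  | succ n ih =>
    have hS := memLp_top_dyadicBernSum n
    have hbS := (hS.intervalIntegrable 0 1).bern_mul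
    have hb2 := memLp_top_bern.intervalIntegrable_sq 0 1
    calc ∫ x in (0 : ℝ)..1, bern x * dyadicBernSum (n + 1) x
        = 1 / 2 * ∫ x in (0 : ℝ)..1, bern x * (bern x + dyadicBernSum n x) := by
          simp_rw [dyadicBernSum_succ]
          exact integral_bern_mul_comp_two_mul (bern_periodic.add (periodic_dyadicBernSum n))
            ((memLp_top_bern.add hS).intervalIntegrable 0 1)
      _ = 1 / 2 * ((∫ x in (0 : ℝ)..1, bern x ^ 2)
            + ∫ x in (0 : ℝ)..1, bern x * dyadicBernSum n x) := by
          rw [← integral_add hb2 hbS]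
          simp_rw [sq, mul_add]
      _ = (1 - 1 / 2 ^ (n + 1)) / 12 := by
          rw [integral_bern_sq, ih]
          ring

theorem integral_dyadicBernSum_sq (n : ℕ) :
    ∫ x in (0 : ℝ)..1, dyadicBernSum n x ^ 2 = n / 4 - 1 / 3 + 1 / (3 * 2 ^ n) := by
  induction n with
  | zero => simp [dyadicBernSum]
  | succ n ih =>
    have hS := memLp_top_dyadicBernSum n
    have hbS := (hS.intervalIntegrable 0 1).bern_mul
    have hb2 := memLp_top_bern.intervalIntegrable_sq 0 1
    have hT := memLp_top_bern.add hS
    calc ∫ x in (0 : ℝ)..1, dyadicBernSum (n + 1) x ^ 2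
        = ∫ x in (0 : ℝ)..1, (bern x + dyadicBernSum n x) ^ 2 := by
          simp_rw [dyadicBernSum_succ]
          have hp : Periodic (fun y => (bern y + dyadicBernSum n y) ^ 2) 1 := fun y => by
            simp only [bern_periodic y, periodic_dyadicBernSum n y]
          exact_mod_cast hp.intervalIntegral_comp_natCast_mul (hT.intervalIntegrable_sq 0 1)
            two_ne_zero
      _ = (∫ x in (0 : ℝ)..1, bern x ^ 2) + 2 * (∫ x in (0 : ℝ)..1, bern x * dyadicBernSum n x)
            + ∫ x in (0 : ℝ)..1, dyadicBernSum n x ^ 2 := by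
          simp_rw [add_sq, mul_assoc]
          rw [integral_add (hb2.add (hbS.const_mul 2)) (hS.intervalIntegrable_sq 0 1),
            integral_add hb2 (hbS.const_mul 2), intervalIntegral.integral_const_mul]
      _ = (n + 1 : ℕ) / 4 - 1 / 3 + 1 / (3 * 2 ^ (n + 1)) := by
          rw [integral_bern_sq, integral_bern_mul_dyadicBernSum, ih]
          push_cast
          field_simp
          ring

theorem sum_range_sq_half_sub_one_div_two_pow (n : ℕ) :
    ∑ p ∈ Finset.range n, ((1 : ℝ) / 2 - 1 / 2 ^ (p + 2)) ^ 2
      = (n : ℝ) / 4 - 5 / 12 + 1 / (2 * 2 ^ n) - 1 / (12 * (2 ^ n) ^ 2) := by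
  induction n with
  | zero => norm_num
  | succ n ih =>
    rw [Finset.sum_range_succ, ih]
    push_cast
    field_simp
    ring

theorem tsum_sq_one_div_two_pow_sub (n : ℕ) :
    ∑' p : ℕ, ((1 : ℝ) / 2 ^ (p + 2) - 1 / 2 ^ (p + n + 2)) ^ 2 = (1 - 1 / 2 ^ n) ^ 2 / 12 := by
  have h : ∀ p : ℕ, ((1 : ℝ) / 2 ^ (p + 2) - 1 / 2 ^ (p + n + 2)) ^ 2
      = ((1 - 1 / 2 ^ n) / 4) ^ 2 * (1 / 4) ^ p := fun p => by
    rw [one_div_pow, show (4 : ℝ) ^ p = 2 ^ p * 2 ^ p by rw [← mul_pow]; norm_num, pow_add,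
      pow_add, pow_add]
    field_simp
    ring
  rw [tsum_congr h, tsum_mul_left, tsum_geometric_of_lt_one (by norm_num) (by norm_num)]
  ring

theorem tendsto_one_div_mul_integral_dyadicBernSum_sq :
    Tendsto (fun n : ℕ => (1 / n : ℝ) * ∫ x in (0 : ℝ)..1, dyadicBernSum n x ^ 2) atTop
      (nhds (1 / 4)) := by
  simp_rw [integral_dyadicBernSum_sq]
  have h : Tendsto (fun n : ℕ => 1 / 4 + (1 / n : ℝ) * (1 / (3 * 2 ^ n) - 1 / 3)) atTop
      (nhds (1 / 4 + 0 * (0 - 1 / 3))) := by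
    refine tendsto_const_nhds.add (tendsto_one_div_atTop_nhds_zero_nat.mul
      (Tendsto.sub_const ?_ _))
    simpa using (tendsto_pow_atTop_nhds_zero_of_lt_one (by norm_num)
      (by norm_num : (1 / 2 : ℝ) < 1)).mul_const 3⁻¹
  rw [zero_mul, add_zero] at h
  refine h.congr' ((eventually_ne_atTop 0).mono fun n hn => ?_)
  field_simp
  ring

/-- For every `n ≥ 1`,
`∑_{p=0}^{n-1} (1/2 - 1/2^(p+2))² + ∑_{p=0}^∞ (1/2^(p+2) - 1/2^(p+n+2))²
  = n/4 - 1/3 + 1/(3·2^n)`; consequently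
`(1/n) ∫_0^1 (∑_{k=1}^n f(2^k x))² dx → 1/4` as `n → ∞`, where `f(x) = x - ⌊x⌋ - 1/2`. -/
theorem variance_bern_sum :
    (∀ n : ℕ, 1 ≤ n →
      (∑ p ∈ Finset.range n, ((1 : ℝ) / 2 - (1 : ℝ) / 2 ^ (p + 2)) ^ 2) +
          ∑' p : ℕ, ((1 : ℝ) / 2 ^ (p + 2) - (1 : ℝ) / 2 ^ (p + n + 2)) ^ 2 =
        (n : ℝ) / 4 - 1 / 3 + 1 / (3 * 2 ^ n)) ∧
    Tendsto (fun n : ℕ =>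
        (1 / n : ℝ) * ∫ x in (0 : ℝ)..1, (∑ k ∈ Finset.Icc 1 n, bern (2 ^ k * x)) ^ 2)
      atTop (nhds (1 / 4)) := by
  refine ⟨fun n _ => ?_, tendsto_one_div_mul_integral_dyadicBernSum_sq⟩
  rw [sum_range_sq_half_sub_one_div_two_pow, tsum_sq_one_div_two_pow_sub]
  field_simp
  ring
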